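/- arXiv:1109.0516 — 5 statements merged into one kernel-verified Lean document; each statement's English description precedes it below -/
import Mathlib

section
/- If t > (√5 - 1)/2, then the set B(t) of x in [0,1] such that G^k(x) ≥ t for all k ≥ 0 is empty, where G is the Gauss map. -/
/-- The Gauss map: `G x = frac (1/x)`; note `(0:ℝ)⁻¹ = 0`, so `G 0 = 0`. -/
noncomputable def gauss (x : ℝ) : ℝ := Int.fract x⁻¹

/-- `B t` is the set of `x ∈ [0,1]` whose Gauss-map orbit stays above `t`. -/
def B (t : ℝ) : Set ℝ := {x ∈ Set.Icc (0:ℝ) 1 | ∀ k : ℕ, t ≤ gauss^[k] x}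

theorem B_empty_of_gt_golden (t : ℝ) (ht : (Real.sqrt 5 - 1) / 2 < t) :
    B t = ∅ := by
  have hs5 : Real.sqrt 5 ^ 2 = 5 := Real.sq_sqrt (by norm_num)
  have hs2 : (2:ℝ) < Real.sqrt 5 := by nlinarith [Real.sqrt_nonneg 5]
  have ht0 : (1:ℝ)/2 < t := by linarith
  rw [Set.eq_empty_iff_forall_notMem]
  rintro x ⟨⟨hx0, hx1⟩, h⟩
  have h0 : t ≤ x := by simpa using h 0
  have h1 : t ≤ gauss x := by simpa using h 1
  have hxlt1 : x < 1 := by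
    rcases lt_or_eq_of_le hx1 with h' | h'
    · exact h'
    · exfalso
      rw [h'] at h1
      simp [gauss] at h1
      linarith
  have hxpos : 0 < x := by linarith
  have hinv1 : 1 < x⁻¹ := (one_lt_inv₀ hxpos).2 hxlt1
  have hinv2 : x⁻¹ < 2 := by
    rw [inv_lt_comm₀ hxpos (by norm_num)]
    linarith
  have hg : gauss x = x⁻¹ - 1 := by
    have : Int.fract x⁻¹ = Int.fract (x⁻¹ - 1) := by
      rw [show x⁻¹ - 1 = x⁻¹ - (1:ℤ) by push_cast; ring, Int.fract_sub_intCast]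
    rw [gauss, this, Int.fract_eq_self.2 ⟨by linarith, by linarith⟩]
  rw [hg] at h1
  have hkey : (t + 1) * x ≤ 1 := by
    have : t + 1 ≤ x⁻¹ := by linarith
    calc (t + 1) * x ≤ x⁻¹ * x := by nlinarith
    _ = 1 := inv_mul_cancel₀ (ne_of_gt hxpos)
  nlinarith [mul_le_mul_of_nonneg_left h0 (by linarith : (0:ℝ) ≤ t + 1)]
end

section
/- For every t ∈ [0,1], the intersection over all t' < t of B(t') equals B(t). -/
theorem iInter_B_lt (t : ℝ) (ht : t ∈ Set.Icc (0:ℝ) 1) :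
    ⋂ t' ∈ Set.Iio t, B t' = B t := by
  ext x
  simp only [Set.mem_iInter, Set.mem_Iio, B, Set.mem_setOf_eq]
  constructor
  · intro h
    have h0 := h (t - 1) (by linarith)
    refine ⟨h0.1, fun k => ?_⟩
    refine le_of_forall_lt_imp_le_of_dense fun t' ht' => ?_
    exact (h t' ht').2 k
  · intro hx t' ht'
    exact ⟨hx.1, fun k => (ht'.le).trans (hx.2 k)⟩
end

section
/- If (α, β) is a connected component of [0,g] \ E, then for every t with α < t ≤ β one has B(t) = B(β). -/
def E : Set ℝ := {x ∈ Set.Icc (0:ℝ) 1 | ∀ k : ℕ, x ≤ gauss^[k] x}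

open Filter Topology Set

section InvOneSided

variable {𝕜 : Type*} [Field 𝕜] [LinearOrder 𝕜] [IsStrictOrderedRing 𝕜] [TopologicalSpace 𝕜]
  [OrderTopology 𝕜] {p : 𝕜}

lemma tendsto_inv_nhdsGT_of_pos (hp : 0 < p) : Tendsto Inv.inv (𝓝[>] p) (𝓝[<] p⁻¹) :=
  tendsto_nhdsWithin_of_tendsto_nhds_of_eventually_within _
    ((continuousAt_inv₀ hp.ne').tendsto.mono_left nhdsWithin_le_nhds)
    (eventually_nhdsWithin_of_forall fun _ hw => inv_strictAnti₀ hp hw)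

lemma tendsto_inv_nhdsLE_of_pos (hp : 0 < p) : Tendsto Inv.inv (𝓝[≤] p) (𝓝[≥] p⁻¹) := by
  refine tendsto_nhdsWithin_of_tendsto_nhds_of_eventually_within _
    ((continuousAt_inv₀ hp.ne').tendsto.mono_left nhdsWithin_le_nhds) ?_
  filter_upwards [self_mem_nhdsWithin, nhdsWithin_le_nhds (Ioi_mem_nhds hp)] with w hwp hw
  exact inv_anti₀ hw (mem_Iic.1 hwp)

end InvOneSided

lemma gauss_nonneg (x : ℝ) : 0 ≤ gauss x := Int.fract_nonneg _

lemma gauss_one : gauss 1 = 0 := by simp [gauss]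

lemma continuousAt_gauss {p : ℝ} (hp : gauss p ≠ 0) : ContinuousAt gauss p := by
  have hp0 : p ≠ 0 := by rintro rfl; simp [gauss] at hp
  refine (continuousAt_fract fun h => hp ?_).comp (continuousAt_inv₀ hp0)
  rw [gauss, Int.fract, ← h, sub_self]

lemma inv_eq_floor_of_gauss_eq_zero {p : ℝ} (hp : gauss p = 0) : p⁻¹ = ⌊p⁻¹⌋ :=
  sub_eq_zero.1 hp

lemma tendsto_gauss_nhdsLE_of_gauss_eq_zero {p : ℝ} (hp : 0 < p) (h : gauss p = 0) :
    Tendsto gauss (𝓝[≤] p) (𝓝 0) := by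
  have hfract := tendsto_fract_right' (α := ℝ) ⌊p⁻¹⌋
  rw [← inv_eq_floor_of_gauss_eq_zero h] at hfract
  exact hfract.comp (tendsto_inv_nhdsLE_of_pos hp)

lemma tendsto_gauss_nhdsGT_of_gauss_eq_zero {p : ℝ} (hp : 0 < p) (h : gauss p = 0) :
    Tendsto gauss (𝓝[>] p) (𝓝[<] 1) := by
  have hfract := tendsto_fract_left (α := ℝ) ⌊p⁻¹⌋
  rw [← inv_eq_floor_of_gauss_eq_zero h] at hfract
  exact hfract.comp (tendsto_inv_nhdsGT_of_pos hp)

/-- Left of a zero of `gauss` its values are small; right of it they are close to `1`, where the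
next application of `gauss` is small. -/
lemma eventually_gauss_lt_or_gauss_gauss_lt {p ε : ℝ} (hp : 0 < p) (h : gauss p = 0)
    (hε : 0 < ε) : ∀ᶠ w in 𝓝 p, gauss w < ε ∨ gauss (gauss w) < ε := by
  rw [← nhdsLE_sup_nhdsGT, eventually_sup]
  constructor
  · exact ((tendsto_gauss_nhdsLE_of_gauss_eq_zero hp h).eventually (gt_mem_nhds hε)).mono
      fun _ => Or.inl
  · have hnear_one := (tendsto_gauss_nhdsLE_of_gauss_eq_zero one_pos gauss_one).comp
      ((tendsto_gauss_nhdsGT_of_gauss_eq_zero hp h).mono_right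
        (nhdsWithin_mono _ Iio_subset_Iic_self))
    exact (hnear_one.eventually (gt_mem_nhds hε)).mono fun _ => Or.inr

lemma iterate_gauss_nonneg {x : ℝ} (hx : 0 ≤ x) : ∀ k, 0 ≤ gauss^[k] x
  | 0 => hx
  | k + 1 => by rw [Function.iterate_succ_apply']; exact gauss_nonneg _

lemma bddBelow_range_iterate_gauss {x : ℝ} (hx : 0 ≤ x) :
    BddBelow (range fun k => gauss^[k] x) :=
  ⟨0, forall_mem_range.2 (iterate_gauss_nonneg hx)⟩

lemma tendsto_iterate_gauss_of_forall_le {ι : Type*} {l : Filter ι} [l.NeBot] {z : ι → ℝ}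
    {p m : ℝ} (hm : 0 < m) (hz : Tendsto z l (𝓝 p)) (hbound : ∀ i k, m ≤ gauss^[k] (z i))
    (k : ℕ) : Tendsto (fun i => gauss^[k] (z i)) l (𝓝 (gauss^[k] p)) := by
  induction k with
  | zero => exact hz
  | succ k ih =>
    have hmp : m ≤ gauss^[k] p := ge_of_tendsto ih (Eventually.of_forall fun i => hbound i k)
    simp only [Function.iterate_succ_apply']
    by_cases h : gauss (gauss^[k] p) = 0
    · obtain ⟨i, hi⟩ :=
        (ih.eventually (eventually_gauss_lt_or_gauss_gauss_lt (hm.trans_le hmp) h hm)).exists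
      have h1 := hbound i (k + 1)
      have h2 := hbound i (k + 2)
      simp only [Function.iterate_succ_apply'] at h1 h2
      rcases hi with hi | hi <;> linarith
    · exact (continuousAt_gauss h).tendsto.comp ih

lemma le_iterate_gauss_of_tendsto {ι : Type*} {l : Filter ι} [l.NeBot] {z : ι → ℝ}
    {p m : ℝ} (hm : 0 < m) (hz : Tendsto z l (𝓝 p)) (hbound : ∀ i k, m ≤ gauss^[k] (z i))
    (k : ℕ) : m ≤ gauss^[k] p :=
  ge_of_tendsto (tendsto_iterate_gauss_of_forall_le hm hz hbound k)
    (Eventually.of_forall fun i => hbound i k)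

lemma iInf_iterate_gauss_mem_E {x : ℝ} (hx : x ∈ Icc (0 : ℝ) 1) : ⨅ k, gauss^[k] x ∈ E := by
  set m := ⨅ k, gauss^[k] x
  have hbdd := bddBelow_range_iterate_gauss hx.1
  have hm0 : 0 ≤ m := le_ciInf (iterate_gauss_nonneg hx.1)
  refine ⟨⟨hm0, (ciInf_le hbdd 0).trans hx.2⟩, ?_⟩
  rcases hm0.eq_or_lt with hm | hm
  · rw [← hm]
    exact iterate_gauss_nonneg le_rfl
  obtain ⟨u, -, hu, hmem⟩ := exists_seq_tendsto_sInf (range_nonempty _) hbdd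
  choose n hn using hmem
  refine le_iterate_gauss_of_tendsto hm hu fun i k => ?_
  rw [← hn, ← Function.iterate_add_apply]
  exact ciInf_le hbdd _

lemma B_antitone : Antitone B :=
  fun _ _ hst _ hx => ⟨hx.1, fun k => hst.trans (hx.2 k)⟩

lemma mem_B_iff {t x : ℝ} : x ∈ B t ↔ x ∈ Icc (0 : ℝ) 1 ∧ t ≤ ⨅ k, gauss^[k] x :=
  and_congr_right fun hx => (le_ciInf_iff (bddBelow_range_iterate_gauss hx.1)).symm

theorem B_constant_on_gap_general (α β : ℝ) (hgap : Set.Ioo α β ∩ E = ∅) :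
    ∀ t : ℝ, α < t → t ≤ β → B t = B β := by
  intro t hαt htβ
  refine (B_antitone htβ).antisymm' fun x hx => ?_
  rw [mem_B_iff] at hx ⊢
  refine ⟨hx.1, not_lt.1 fun hlt => ?_⟩
  have hmem : ⨅ k, gauss^[k] x ∈ Ioo α β ∩ E :=
    ⟨⟨hαt.trans_le hx.2, hlt⟩, iInf_iterate_gauss_mem_E hx.1⟩
  rw [hgap] at hmem
  exact hmem

/-- If `(α, β)` is a connected component of `[0,g] \ E`, then `B t = B β` for all
`t ∈ (α, β]`. -/
theorem B_constant_on_gap (α β : ℝ) (hαβ : α < β) (hα : 0 ≤ α)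
    (hβg : β ≤ (Real.sqrt 5 - 1) / 2)
    (hgap : Set.Ioo α β ∩ E = ∅) (hβE : β ∈ E) :
    ∀ t : ℝ, α < t → t ≤ β → B t = B β :=
  B_constant_on_gap_general α β hgap
end

section
/- Let g = (√5-1)/2. Then B(g) = {g}, and more generally B(t) = {g} for every t with √2 - 1 < t ≤ g. -/
set_option maxHeartbeats 1600000 in
theorem B_eq_singleton_golden :
    B ((Real.sqrt 5 - 1) / 2) = {(Real.sqrt 5 - 1) / 2} ∧
      ∀ t : ℝ, Real.sqrt 2 - 1 < t → t ≤ (Real.sqrt 5 - 1) / 2 →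
        B t = {(Real.sqrt 5 - 1) / 2} := by
  set g : ℝ := (Real.sqrt 5 - 1) / 2 with hgdef
  have h5 : Real.sqrt 5 ^ 2 = 5 := Real.sq_sqrt (by norm_num)
  have h5lb : 2 < Real.sqrt 5 := by nlinarith [Real.sqrt_nonneg 5]
  have h5ub : Real.sqrt 5 < 3 := by nlinarith [Real.sqrt_nonneg 5]
  have h2sq : Real.sqrt 2 ^ 2 = 2 := Real.sq_sqrt (by norm_num)
  have h2lb : 1 < Real.sqrt 2 := by nlinarith [Real.sqrt_nonneg 2]
  have h2ub : Real.sqrt 2 < 2 := by nlinarith [Real.sqrt_nonneg 2]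
  have hg0 : 1/2 < g := by rw [hgdef]; linarith
  have hg1 : g < 1 := by rw [hgdef]; linarith
  have hgg : g * g + g = 1 := by rw [hgdef]; nlinarith
  have hgpos : 0 < g := by linarith
  have hgne : g ≠ 0 := ne_of_gt hgpos
  have hginv : g⁻¹ = g + 1 := by
    have h : (g + 1) * g = 1 := by nlinarith
    exact (eq_inv_of_mul_eq_one_left h).symm
  have hfix : gauss g = g := by
    unfold gauss
    rw [hginv, Int.fract_add_one, Int.fract_eq_self.mpr ⟨le_of_lt hgpos, hg1⟩]
  have hsg : Real.sqrt 2 - 1 < g := by nlinarith [Real.sqrt_nonneg 2]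
  -- g belongs to B t for t ≤ g
  have hmem : ∀ t : ℝ, t ≤ g → g ∈ B t := by
    intro t ht
    refine ⟨⟨le_of_lt hgpos, le_of_lt hg1⟩, fun k => ?_⟩
    rw [Function.iterate_fixed hfix]
    exact ht
  -- the key subset lemma
  have key : ∀ t : ℝ, Real.sqrt 2 - 1 < t → B t ⊆ {g} := by
    intro t ht x hx
    obtain ⟨⟨hx0, hx1⟩, hiter⟩ := hx
    have ht0 : 0 < t := by linarith
    -- step lemma
    have step : ∀ y : ℝ, t ≤ y → y < 1 → t ≤ gauss y →
        1/2 < y ∧ gauss y = y⁻¹ - 1 := by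
      intro y hty hy1 hgy
      have hy0 : 0 < y := lt_of_lt_of_le ht0 hty
      have hyinv1 : 1 < y⁻¹ := ((one_lt_inv₀ hy0).mpr hy1)
      have hyub : y⁻¹ < Real.sqrt 2 + 1 := by
        have hsy : Real.sqrt 2 - 1 < y := lt_of_lt_of_le ht hty
        rw [inv_lt_comm₀ hy0 (by linarith)]
        have hprod : (Real.sqrt 2 + 1) * (Real.sqrt 2 - 1) = 1 := by nlinarith
        rw [inv_eq_one_div, div_lt_iff₀ (by linarith : (0:ℝ) < Real.sqrt 2 + 1)]
        nlinarith
      have hhalf : 1/2 < y := by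
        by_contra hle
        push_neg at hle
        have h2y : (2:ℝ) ≤ y⁻¹ := by
          rw [show (2:ℝ) = ((1:ℝ)/2)⁻¹ by norm_num]
          exact inv_anti₀ hy0 hle
        have hfl : ⌊y⁻¹⌋ = 2 := by
          apply Int.floor_eq_iff.mpr
          constructor
          · push_cast; linarith
          · push_cast; linarith
        have hgv : gauss y = y⁻¹ - 2 := by
          unfold gauss
          rw [← Int.self_sub_floor, hfl]
          push_cast; ring
        have : gauss y < Real.sqrt 2 - 1 := by rw [hgv]; linarith
        linarith
      refine ⟨hhalf, ?_⟩
      have h2 : y⁻¹ < 2 := by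
        rw [inv_lt_comm₀ hy0 (by norm_num)]
        linarith
      have hfl : ⌊y⁻¹⌋ = 1 := by
        apply Int.floor_eq_iff.mpr
        constructor
        · push_cast; linarith
        · push_cast; linarith
      unfold gauss
      rw [← Int.self_sub_floor, hfl]
      push_cast; ring
    -- x < 1
    have hx1' : x < 1 := by
      rcases lt_or_eq_of_le hx1 with h | h
      · exact h
      · exfalso
        have h1 := hiter 1
        rw [Function.iterate_one, h] at h1
        unfold gauss at h1
        rw [inv_one, Int.fract_one] at h1
        linarith
    -- all iterates are < 1
    have hlt1 : ∀ k, gauss^[k] x < 1 := by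
      intro k
      cases k with
      | zero => simpa using hx1'
      | succ n =>
        rw [Function.iterate_succ_apply']
        exact Int.fract_lt_one _
    -- structure of each iterate
    have hstep : ∀ k, 1/2 < gauss^[k] x ∧
        gauss^[k+1] x = (gauss^[k] x)⁻¹ - 1 := by
      intro k
      have hnext : t ≤ gauss (gauss^[k] x) := by
        have h' := hiter (k+1)
        rwa [Function.iterate_succ_apply'] at h'
      have := step (gauss^[k] x) (hiter k) (hlt1 k) hnext
      rw [Function.iterate_succ_apply']
      exact this
    -- expansion estimate
    have hexp : ∀ k, |x - g| ≤ g ^ k * |gauss^[k] x - g| := by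
      intro k
      induction k with
      | zero => simp
      | succ n ih =>
        refine le_trans ih ?_
        rw [pow_succ, mul_assoc]
        apply mul_le_mul_of_nonneg_left ?_ (pow_nonneg (le_of_lt hgpos) n)
        -- |x_n - g| ≤ g * |x_{n+1} - g|
        obtain ⟨hh, heq⟩ := hstep n
        set y := gauss^[n] x with hy
        have hy0 : (0:ℝ) < y := by linarith
        have hyne : y ≠ 0 := ne_of_gt hy0
        have hid : y - g = y * g * (g - gauss^[n+1] x) := by
          rw [heq]
          field_simp
          linear_combination (-(y^2)) * hgg + ((y^2 - y)/4) * h5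
        calc |y - g| = |y * g| * |g - gauss^[n+1] x| := by rw [hid, abs_mul]
          _ = y * g * |gauss^[n+1] x - g| := by
              rw [abs_of_pos (mul_pos hy0 hgpos), abs_sub_comm]
          _ ≤ 1 * g * |gauss^[n+1] x - g| := by
              apply mul_le_mul_of_nonneg_right _ (abs_nonneg _)
              apply mul_le_mul_of_nonneg_right (le_of_lt (hlt1 n)) (le_of_lt hgpos)
          _ = g * |gauss^[n+1] x - g| := by ring
    -- conclude x = g
    have hbound : ∀ k, |x - g| ≤ g ^ k := by
      intro k
      refine le_trans (hexp k) ?_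
      have h1 : |gauss^[k] x - g| ≤ 1 := by
        rw [abs_le]
        constructor
        · have := hiter k; nlinarith
        · have := hlt1 k; nlinarith
      calc g ^ k * |gauss^[k] x - g| ≤ g ^ k * 1 :=
            mul_le_mul_of_nonneg_left h1 (pow_nonneg (le_of_lt hgpos) k)
        _ = g ^ k := by ring
    have habs : |x - g| ≤ 0 := by
      by_contra hcon
      push_neg at hcon
      obtain ⟨n, hn⟩ := exists_pow_lt_of_lt_one hcon hg1
      exact absurd (hbound n) (not_le.mpr hn)
    have : x - g = 0 := abs_eq_zero.mp (le_antisymm habs (abs_nonneg _))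
    have hxg : x = g := by linarith
    rw [Set.mem_singleton_iff]
    exact hxg
  constructor
  · apply Set.eq_singleton_iff_unique_mem.mpr
    exact ⟨hmem g le_rfl, fun y hy => key g hsg hy⟩
  · intro t ht1 ht2
    apply Set.eq_singleton_iff_unique_mem.mpr
    exact ⟨hmem t ht2, fun y hy => key t ht1 hy⟩
end

section
/- For two finite strings S, T of positive integers: ST < TS in the alternate lexicographic order (on strings of length |S|+|T|) if and only if the quadratic irrational [0; S,S,S,...] is less than [0; T,T,T,...]. -/
noncomputable def cf (S : List ℕ) (x : ℝ) : ℝ :=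
  S.foldr (fun a y => 1 / ((a : ℝ) + y)) x

lemma cf_nil (u : ℝ) : cf [] u = u := rfl

lemma cf_cons (a : ℕ) (W : List ℕ) (u : ℝ) : cf (a :: W) u = 1 / (a + cf W u) := rfl

lemma cf_append (A B : List ℕ) (u : ℝ) : cf (A ++ B) u = cf A (cf B u) := by
  simp [cf, List.foldr_append]

lemma cf_nonneg {W : List ℕ} {u : ℝ} (hu : 0 ≤ u) : 0 ≤ cf W u := by
  induction W with
  | nil => exact hu
  | cons a W ih =>
    rw [cf_cons]
    positivity

lemma cf_pos {W : List ℕ} (hW : W ≠ []) (h1 : ∀ a ∈ W, 1 ≤ a) {u : ℝ} (hu : 0 ≤ u) :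
    0 < cf W u := by
  cases W with
  | nil => exact absurd rfl hW
  | cons a W =>
    rw [cf_cons]
    have ha : (1:ℝ) ≤ a := by exact_mod_cast h1 a (by simp)
    have := cf_nonneg (W := W) hu
    positivity

lemma cf_le_one {W : List ℕ} (hW : W ≠ []) (h1 : ∀ a ∈ W, 1 ≤ a) {u : ℝ} (hu : 0 ≤ u) :
    cf W u ≤ 1 := by
  cases W with
  | nil => exact absurd rfl hW
  | cons a W =>
    rw [cf_cons]
    have ha : (1:ℝ) ≤ a := by exact_mod_cast h1 a (by simp)
    have h0 := cf_nonneg (W := W) hu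
    rw [div_le_one (by linarith)]
    linarith

lemma cf_strict {W : List ℕ} (h1 : ∀ a ∈ W, 1 ≤ a) {u v : ℝ} (hu : 0 ≤ u) (huv : u < v) :
    (Even W.length → cf W u < cf W v) ∧ (¬ Even W.length → cf W v < cf W u) := by
  induction W with
  | nil => exact ⟨fun _ => huv, fun h => absurd (Even.zero) h⟩
  | cons a W ih =>
    have hv : 0 ≤ v := le_of_lt (lt_of_le_of_lt hu huv)
    have ih' := ih (fun b hb => h1 b (by simp [hb]))
    have ha : (1:ℝ) ≤ a := by exact_mod_cast h1 a (by simp)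
    have hcu : 0 ≤ cf W u := cf_nonneg hu
    have hcv : 0 ≤ cf W v := cf_nonneg hv
    have hpar : Even (a :: W).length ↔ ¬ Even W.length := by
      simp [List.length_cons, Nat.even_add_one]
    constructor
    · intro he
      have hlt : cf W v < cf W u := ih'.2 (hpar.mp he)
      rw [cf_cons, cf_cons]
      apply one_div_lt_one_div_of_lt <;> linarith
    · intro ho
      have hlt : cf W u < cf W v := ih'.1 (by by_contra h; exact ho (hpar.mpr h))
      rw [cf_cons, cf_cons]
      apply one_div_lt_one_div_of_lt <;> linarith

/-- the periodic sequence with repeating block `S` -/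
def per (S : List ℕ) (i : ℕ) : ℕ := S.getD (i % S.length) 0

lemma per_mem {S : List ℕ} (hS : S ≠ []) (i : ℕ) : per S i ∈ S := by
  have h : i % S.length < S.length :=
    Nat.mod_lt _ (List.length_pos_iff.mpr hS)
  rw [per, List.getD_eq_getElem _ _ h]
  exact List.getElem_mem h

lemma per_sub {S : List ℕ} (i : ℕ) (h : S.length ≤ i) : per S (i - S.length) = per S i := by
  unfold per
  congr 1
  conv_rhs => rw [show i = (i - S.length) + S.length from (Nat.sub_add_cancel h).symm]
  rw [Nat.add_mod_right]

/-- `j` copies of `S` -/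
def reps (S : List ℕ) : ℕ → List ℕ
  | 0 => []
  | j+1 => S ++ reps S j

lemma reps_length (S : List ℕ) (j : ℕ) : (reps S j).length = j * S.length := by
  induction j with
  | zero => simp [reps]
  | succ j ih => simp [reps, ih, Nat.succ_mul, Nat.add_comm]

lemma reps_mem {S : List ℕ} {j : ℕ} {a : ℕ} (h : a ∈ reps S j) : a ∈ S := by
  induction j with
  | zero => simp [reps] at h
  | succ j ih =>
    simp [reps] at h
    rcases h with h | h
    · exact h
    · exact ih h

lemma cf_reps {S : List ℕ} {x : ℝ} (hfx : cf S x = x) (j : ℕ) : cf (reps S j) x = x := by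
  induction j with
  | zero => rfl
  | succ j ih => rw [reps, cf_append, ih, hfx]

lemma reps_getD {S : List ℕ} (hS : S ≠ []) (j i : ℕ) (h : i < j * S.length) :
    (reps S j).getD i 0 = per S i := by
  induction j generalizing i with
  | zero => simp at h
  | succ j ih =>
    rw [reps]
    by_cases hi : i < S.length
    · rw [List.getD_append _ _ _ _ hi]
      unfold per
      rw [Nat.mod_eq_of_lt hi]
    · push_neg at hi
      rw [List.getD_append_right _ _ _ _ hi, ih _ (by
        have : (j+1) * S.length = j * S.length + S.length := Nat.succ_mul _ _
        omega), per_sub _ hi]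

lemma take_eq_of_getD {l₁ l₂ : List ℕ} {k : ℕ} (h₁ : k ≤ l₁.length) (h₂ : k ≤ l₂.length)
    (h : ∀ i < k, l₁.getD i 0 = l₂.getD i 0) : l₁.take k = l₂.take k := by
  apply List.ext_getElem
  · simp [h₁, h₂]
  · intro i hi₁ hi₂
    have hik : i < k := by simp at hi₁; omega
    have e₁ : i < l₁.length := lt_of_lt_of_le hik h₁
    have e₂ : i < l₂.length := lt_of_lt_of_le hik h₂
    have := h i hik
    rw [List.getD_eq_getElem _ _ e₁, List.getD_eq_getElem _ _ e₂] at this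
    simpa [List.getElem_take] using this

lemma decomp (l : List ℕ) (k : ℕ) (h : k < l.length) :
    l = l.take k ++ (l.getD k 0 :: l.drop (k+1)) := by
  conv_lhs => rw [← List.take_append_drop k l]
  congr 1
  rw [List.drop_eq_getElem_cons h, List.getD_eq_getElem _ _ h]

lemma append_getD_per {S T : List ℕ} (hS : S ≠ []) (hT : T ≠ []) {k : ℕ}
    (hag : ∀ j < k, per S j = per T j) :
    ∀ i ≤ k, i < S.length + T.length → (S ++ T).getD i 0 = per S i := by
  intro i hik hiN
  by_cases hi : i < S.length
  · rw [List.getD_append _ _ _ _ hi]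
    unfold per
    rw [Nat.mod_eq_of_lt hi]
  · push_neg at hi
    rw [List.getD_append_right _ _ _ _ hi]
    have h1 : i - S.length < T.length := by omega
    have h2 : i - S.length < k := by
      have : 0 < S.length := List.length_pos_iff.mpr hS
      omega
    have : T.getD (i - S.length) 0 = per T (i - S.length) := by
      unfold per; rw [Nat.mod_eq_of_lt h1]
    rw [this, ← hag _ h2, per_sub _ hi]

lemma ext_getD {l₁ l₂ : List ℕ} (hlen : l₁.length = l₂.length)
    (h : ∀ i < l₁.length, l₁.getD i 0 = l₂.getD i 0) : l₁ = l₂ := by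
  have h2 := take_eq_of_getD (le_refl l₁.length) (le_of_eq hlen) h
  rwa [List.take_length, hlen, List.take_length] at h2

lemma exists_diff (S T : List ℕ) (hS : S ≠ []) (hT : T ≠ [])
    (hne : S ++ T ≠ T ++ S) :
    ∃ i, i < S.length + T.length ∧ per S i ≠ per T i := by
  by_contra h
  push_neg at h
  apply hne
  apply ext_getD (by simp [Nat.add_comm])
  intro i hi
  have hiN : i < S.length + T.length := by simpa using hi
  have hag : ∀ j < S.length + T.length, per S j = per T j := h
  rw [append_getD_per (k := S.length + T.length) hS hT (fun j hj => hag j hj) i (le_of_lt hiN) hiN,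
    append_getD_per (k := T.length + S.length) hT hS (fun j hj => (hag j (by omega)).symm) i
      (le_of_lt (by omega)) (by omega)]
  exact hag i hiN

lemma aux_main (S T : List ℕ) (hS : S ≠ []) (hT : T ≠ [])
    (hSpos : ∀ a ∈ S, 1 ≤ a) (hTpos : ∀ a ∈ T, 1 ≤ a)
    (x y : ℝ) (hx : x ∈ Set.Icc (0:ℝ) 1) (hfx : cf S x = x)
    (hy : y ∈ Set.Icc (0:ℝ) 1) (hfy : cf T y = y)
    (k : ℕ) (hkN : k < S.length + T.length)
    (hag : ∀ j < k, per S j = per T j) (hab : per S k < per T k) :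
    (Even k → cf (T ++ S) 0 < cf (S ++ T) 0 ∧ y < x) ∧
    (¬ Even k → cf (S ++ T) 0 < cf (T ++ S) 0 ∧ x < y) := by
  have hm : 0 < S.length := List.length_pos_iff.mpr hS
  have hn : 0 < T.length := List.length_pos_iff.mpr hT
  set a := per S k with ha_def
  set b := per T k with hb_def
  have ha1 : 1 ≤ a := hSpos _ (per_mem hS k)
  have hb1 : 1 ≤ b := hTpos _ (per_mem hT k)
  have hagT : ∀ j < k, per T j = per S j := fun j hj => (hag j hj).symm
  have hST : (S ++ T).getD k 0 = a :=
    append_getD_per (k := k) hS hT hag k le_rfl hkN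
  have hTS : (T ++ S).getD k 0 = b :=
    append_getD_per (k := k) hT hS hagT k le_rfl (by omega)
  have hkST : k < (S ++ T).length := by simpa using hkN
  have hkTS : k < (T ++ S).length := by simp; omega
  -- common prefix
  set P := (S ++ T).take k with hP_def
  have hPTS : (T ++ S).take k = P := by
    apply take_eq_of_getD (le_of_lt hkTS) (le_of_lt hkST)
    intro i hik
    rw [append_getD_per (k := k) hT hS hagT i (le_of_lt hik) (by omega),
      append_getD_per (k := k) hS hT hag i (le_of_lt hik) (by omega)]
    exact hagT i hik
  have hPlen : P.length = k := by
    simp [hP_def]; omega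
  have hPpos : ∀ c ∈ P, 1 ≤ c := fun c hc => by
    have : c ∈ S ++ T := List.mem_of_mem_take hc
    simp at this
    rcases this with h | h
    · exact hSpos c h
    · exact hTpos c h
  -- finite decompositions
  set U := (S ++ T).drop (k+1) with hU_def
  set V := (T ++ S).drop (k+1) with hV_def
  have hdU : S ++ T = P ++ (a :: U) := by
    rw [hP_def, hU_def, ← hST]; exact decomp _ k hkST
  have hdV : T ++ S = P ++ (b :: V) := by
    rw [← hPTS, hV_def, ← hTS]; exact decomp _ k hkTS
  have hUlen : U.length = S.length + T.length - (k+1) := by simp [hU_def]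
  have hVlen : V.length = S.length + T.length - (k+1) := by simp [hV_def]; omega
  have hUpos : ∀ c ∈ U, 1 ≤ c := fun c hc => by
    have : c ∈ S ++ T := List.mem_of_mem_drop hc
    simp at this
    rcases this with h | h
    · exact hSpos c h
    · exact hTpos c h
  have hVpos : ∀ c ∈ V, 1 ≤ c := fun c hc => by
    have : c ∈ T ++ S := List.mem_of_mem_drop hc
    simp at this
    rcases this with h | h
    · exact hTpos c h
    · exact hSpos c h
  set ξ := cf U 0 with hξ_def
  set η := cf V 0 with hη_def
  have hξ0 : 0 ≤ ξ := cf_nonneg le_rfl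
  have hη0 : 0 ≤ η := cf_nonneg le_rfl
  have hab' : (a : ℝ) + 1 ≤ b := by exact_mod_cast hab
  have hlt : (a : ℝ) + ξ < b + η := by
    by_cases hU : U = []
    · have hV : V = [] := by
        rw [← List.length_eq_zero_iff]; rw [hVlen, ← hUlen, hU]; simp
      rw [hξ_def, hη_def, hU, hV, cf_nil]
      have : (a : ℝ) < b := by exact_mod_cast hab
      linarith
    · have hV : V ≠ [] := by
        intro h
        apply hU
        have h1 : V.length = 0 := by rw [h]; rfl
        exact List.eq_nil_of_length_eq_zero (by omega)
      have h1 : ξ ≤ 1 := cf_le_one hU hUpos le_rfl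
      have h2 : 0 < η := cf_pos hV hVpos le_rfl
      linarith
  have ha0 : (0:ℝ) < a + ξ := by
    have : (1:ℝ) ≤ a := by exact_mod_cast ha1
    linarith
  have hb0 : (0:ℝ) < b + η := by
    have : (1:ℝ) ≤ b := by exact_mod_cast hb1
    linarith
  have huv : 1 / ((b:ℝ) + η) < 1 / (a + ξ) := one_div_lt_one_div_of_lt ha0 hlt
  have hu0 : (0:ℝ) ≤ 1 / (b + η) := le_of_lt (by positivity)
  have hfin := cf_strict hPpos hu0 huv
  have hfin1 : cf (S ++ T) 0 = cf P (1 / (a + ξ)) := by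
    rw [hdU, cf_append, cf_cons]
  have hfin2 : cf (T ++ S) 0 = cf P (1 / (b + η)) := by
    rw [hdV, cf_append, cf_cons]
  -- periodic decompositions
  have hx0 : (0:ℝ) ≤ x := hx.1
  have hy0 : (0:ℝ) ≤ y := hy.1
  set L := reps S (k+2) with hL_def
  set M := reps T (k+2) with hM_def
  have hLlen : k + 2 ≤ L.length := by
    rw [hL_def, reps_length]
    calc k + 2 = (k+2) * 1 := by ring
    _ ≤ (k+2) * S.length := by exact Nat.mul_le_mul_left _ hm
  have hMlen : k + 2 ≤ M.length := by
    rw [hM_def, reps_length]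
    calc k + 2 = (k+2) * 1 := by ring
    _ ≤ (k+2) * T.length := by exact Nat.mul_le_mul_left _ hn
  have hkL : k < L.length := by omega
  have hkM : k < M.length := by omega
  have hLgetD : ∀ i ≤ k, L.getD i 0 = per S i := fun i hik => by
    rw [hL_def, reps_getD hS _ _ (by rw [← reps_length S (k+2), ← hL_def]; omega)]
  have hMgetD : ∀ i ≤ k, M.getD i 0 = per T i := fun i hik => by
    rw [hM_def, reps_getD hT _ _ (by rw [← reps_length T (k+2), ← hM_def]; omega)]
  have hPL : L.take k = P := by
    apply take_eq_of_getD (le_of_lt hkL) (le_of_lt hkST)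
    intro i hik
    rw [hLgetD i (le_of_lt hik),
      append_getD_per (k := k) hS hT hag i (le_of_lt hik) (by omega)]
  have hPM : M.take k = P := by
    apply take_eq_of_getD (le_of_lt hkM) (le_of_lt hkST)
    intro i hik
    rw [hMgetD i (le_of_lt hik),
      append_getD_per (k := k) hS hT hag i (le_of_lt hik) (by omega)]
    exact hagT i hik
  set R := L.drop (k+1) with hR_def
  set R' := M.drop (k+1) with hR'_def
  have hRne : R ≠ [] := by
    intro h
    have h1 : R.length = 0 := by rw [h]; rfl
    rw [hR_def, List.length_drop] at h1; omega
  have hR'ne : R' ≠ [] := by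
    intro h
    have h1 : R'.length = 0 := by rw [h]; rfl
    rw [hR'_def, List.length_drop] at h1; omega
  have hRpos : ∀ c ∈ R, 1 ≤ c := fun c hc =>
    hSpos c (reps_mem (List.mem_of_mem_drop hc))
  have hR'pos : ∀ c ∈ R', 1 ≤ c := fun c hc =>
    hTpos c (reps_mem (List.mem_of_mem_drop hc))
  have hdL : L = P ++ (a :: R) := by
    have := decomp L k hkL
    rwa [hPL, hLgetD k le_rfl, ← hR_def] at this
  have hdM : M = P ++ (b :: R') := by
    have := decomp M k hkM
    rwa [hPM, hMgetD k le_rfl, ← hR'_def] at this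
  set ξ' := cf R x with hξ'_def
  set η' := cf R' y with hη'_def
  have hξ'1 : ξ' ≤ 1 := cf_le_one hRne hRpos hx0
  have hη'0 : 0 < η' := cf_pos hR'ne hR'pos hy0
  have hlt' : (a : ℝ) + ξ' < b + η' := by linarith
  have ha0' : (0:ℝ) < a + ξ' := by
    have h1 : (1:ℝ) ≤ a := by exact_mod_cast ha1
    have h2 : 0 ≤ ξ' := cf_nonneg hx0
    linarith
  have huv' : 1 / ((b:ℝ) + η') < 1 / (a + ξ') := one_div_lt_one_div_of_lt ha0' hlt'
  have hu0' : (0:ℝ) ≤ 1 / (b + η') := le_of_lt (by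
    have : (1:ℝ) ≤ b := by exact_mod_cast hb1
    positivity)
  have hper := cf_strict hPpos hu0' huv'
  have hxP : x = cf P (1 / (a + ξ')) := by
    conv_lhs => rw [← cf_reps hfx (k+2), ← hL_def, hdL, cf_append, cf_cons]
  have hyP : y = cf P (1 / (b + η')) := by
    conv_lhs => rw [← cf_reps hfy (k+2), ← hM_def, hdM, cf_append, cf_cons]
  constructor
  · intro hev
    have hevP : Even P.length := by rwa [hPlen]
    exact ⟨by rw [hfin1, hfin2]; exact hfin.1 hevP,
      by rw [hxP, hyP]; exact hper.1 hevP⟩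
  · intro hod
    have hodP : ¬ Even P.length := by rwa [hPlen]
    exact ⟨by rw [hfin1, hfin2]; exact hfin.2 hodP,
      by rw [hxP, hyP]; exact hper.2 hodP⟩

/-- The string lemma: for strings `S`, `T` which are not both powers of a common
string (equivalently `ST ≠ TS`), one has `ST < TS` in the alternate
lexicographic order (i.e. `[0;ST] < [0;TS]` as real numbers) if and only if
`[0;S̄] < [0;T̄]`, where `x = [0;S̄]` and `y = [0;T̄]` are the periodic points,
i.e. the fixed points in `[0,1]` of `cf S` and `cf T` respectively. -/
theorem string_lemma (S T : List ℕ) (hS : S ≠ []) (hT : T ≠ [])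
    (hSpos : ∀ a ∈ S, 1 ≤ a) (hTpos : ∀ a ∈ T, 1 ≤ a)
    (hne : S ++ T ≠ T ++ S)
    (x y : ℝ) (hx : x ∈ Set.Icc (0:ℝ) 1) (hfx : cf S x = x)
    (hy : y ∈ Set.Icc (0:ℝ) 1) (hfy : cf T y = y) :
    cf (S ++ T) 0 < cf (T ++ S) 0 ↔ x < y := by
  obtain ⟨i, hiN, hi⟩ := exists_diff S T hS hT hne
  have hex : ∃ i, per S i ≠ per T i := ⟨i, hi⟩
  classical
  set k := Nat.find hex with hk_def
  have hk : per S k ≠ per T k := Nat.find_spec hex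
  have hag : ∀ j < k, per S j = per T j := fun j hj => by
    by_contra h
    exact absurd hj (not_lt.mpr (Nat.find_le h))
  have hkN : k < S.length + T.length := lt_of_le_of_lt (Nat.find_min' hex hi) hiN
  rcases lt_or_gt_of_ne hk with hab | hab
  · have H := aux_main S T hS hT hSpos hTpos x y hx hfx hy hfy k hkN hag hab
    by_cases hev : Even k
    · obtain ⟨h1, h2⟩ := H.1 hev
      exact ⟨fun h => absurd h (lt_asymm h1), fun h => absurd h (lt_asymm h2)⟩
    · obtain ⟨h1, h2⟩ := H.2 hev
      exact ⟨fun _ => h2, fun _ => h1⟩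
  · have hagT : ∀ j < k, per T j = per S j := fun j hj => (hag j hj).symm
    have H := aux_main T S hT hS hTpos hSpos y x hy hfy hx hfx k (by omega) hagT hab
    by_cases hev : Even k
    · obtain ⟨h1, h2⟩ := H.1 hev
      exact ⟨fun _ => h2, fun _ => h1⟩
    · obtain ⟨h1, h2⟩ := H.2 hev
      exact ⟨fun h => absurd h (lt_asymm h1), fun h => absurd h (lt_asymm h2)⟩
end
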